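/- Let A be a positive bounded linear operator on a complex Hilbert space H with ‖A‖ ≤ 1, and let p ≥ 2 be a real number. Then w(A)^{2p} ≤ ‖A^p‖ − ℓ( |A − ‖A‖·1_H|^p ). -/

import Mathlib

variable {H : Type*} [NormedAddCommGroup H] [InnerProductSpace ℂ H] [CompleteSpace H]

/-- The numerical radius `w(T) = sup { |⟨Tx, x⟩| : ‖x‖ = 1 }`. -/
noncomputable def numRad (T : H →L[ℂ] H) : ℝ :=
  ⨆ x : {x : H // ‖x‖ = 1}, ‖(inner ℂ (T x) x : ℂ)‖

/-- The spectral radius `r(T)` as a real number. -/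
noncomputable def specRad (T : H →L[ℂ] H) : ℝ :=
  (spectralRadius ℂ T).toReal

/-- `ℓ(T) = inf { ‖Tx‖ : ‖x‖ = 1 }`. -/
noncomputable def lowB (T : H →L[ℂ] H) : ℝ :=
  ⨅ x : {x : H // ‖x‖ = 1}, ‖T x‖

/-- The absolute value `|T| = (T*T)^(1/2)`. -/
noncomputable def oAbs (T : H →L[ℂ] H) : H →L[ℂ] H :=
  cfc Real.sqrt (ContinuousLinearMap.adjoint T * T)

/-- Real powers of a (positive) operator via the continuous functional calculus. -/
noncomputable def oPow (T : H →L[ℂ] H) (r : ℝ) : H →L[ℂ] H :=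
  cfc (fun t : ℝ => t ^ r) T

/-!
For positive `A` the norm `‖A‖` lies in the spectrum, so `0` lies in the spectrum of
`|A - ‖A‖|^p`. A self-adjoint `T` with `0 ∈ σ(T)` has `ℓ(T) = 0`: otherwise
`⟪T*T x, x⟫ = ‖T x‖² ≥ ℓ(T)² ‖x‖²` would make `T*T = T²`, hence `T`, invertible.
It remains to see `w(A)^(2p) ≤ ‖A‖^(2p) ≤ ‖A‖^p ≤ ‖A^p‖`, using `‖A‖ ≤ 1` and `‖A‖^p ∈ σ(A^p)`.
-/

open ContinuousLinearMap

lemma zero_mem_spectrum_mul_self_iff {R A : Type*} [CommSemiring R] [Ring A] [Algebra R A]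
    {a : A} : (0 : R) ∈ spectrum R (a * a) ↔ (0 : R) ∈ spectrum R a := by
  simp only [spectrum.zero_mem_iff, ← pow_two, isUnit_pow_iff two_ne_zero]

section InnerProductSpace

variable {E : Type*} [NormedAddCommGroup E] [InnerProductSpace ℂ E]

lemma numRad_nonneg (T : E →L[ℂ] E) : 0 ≤ numRad T :=
  Real.iSup_nonneg fun _ ↦ norm_nonneg _

lemma numRad_le_norm (T : E →L[ℂ] E) : numRad T ≤ ‖T‖ := by
  refine Real.iSup_le (fun x ↦ ?_) (norm_nonneg T)
  calc ‖(inner ℂ (T x) x : ℂ)‖ ≤ ‖T x‖ * ‖(x : E)‖ := norm_inner_le_norm _ _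
    _ ≤ ‖T‖ * ‖(x : E)‖ * ‖(x : E)‖ := by gcongr; exact T.le_opNorm x
    _ = ‖T‖ := by rw [x.2, mul_one, mul_one]

lemma lowB_nonneg (T : E →L[ℂ] E) : 0 ≤ lowB T :=
  Real.iInf_nonneg fun _ ↦ norm_nonneg _

lemma lowB_mul_norm_le (T : E →L[ℂ] E) (x : E) : lowB T * ‖x‖ ≤ ‖T x‖ := by
  rcases eq_or_ne x 0 with rfl | hx
  · simp
  have hx' : 0 < ‖x‖ := norm_pos_iff.2 hx
  have hunit : ‖(‖x‖⁻¹ : ℝ) • x‖ = 1 := by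
    rw [norm_smul, norm_inv, norm_norm, inv_mul_cancel₀ hx'.ne']
  have hbdd : BddBelow (Set.range fun y : {y : E // ‖y‖ = 1} ↦ ‖T y‖) :=
    ⟨0, by rintro _ ⟨y, rfl⟩; exact norm_nonneg _⟩
  have h : lowB T ≤ _ := ciInf_le hbdd ⟨_, hunit⟩
  rw [map_smul_of_tower, norm_smul, norm_inv, norm_norm] at h
  rwa [← le_inv_mul_iff₀' hx']

lemma isUnit_adjoint_mul_self_of_lowB_pos [CompleteSpace E] {T : E →L[ℂ] E} (hT : 0 < lowB T) :
    IsUnit (adjoint T * T) := by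
  refine isUnit_of_forall_le_norm_inner_map _ (c := (lowB T ^ 2).toNNReal)
    (Real.toNNReal_pos.2 (by positivity)) fun x ↦ ?_
  rw [Real.coe_toNNReal _ (sq_nonneg _), mul_apply_eq_comp, adjoint_inner_left,
    inner_self_eq_norm_sq_to_K, norm_pow, RCLike.norm_ofReal, abs_norm, ← mul_pow, mul_comm]
  gcongr
  exact lowB_mul_norm_le T x

lemma lowB_eq_zero_of_zero_mem_spectrum [CompleteSpace E] {T : E →L[ℂ] E} (hT : IsSelfAdjoint T)
    (h0 : (0 : ℝ) ∈ spectrum ℝ T) : lowB T = 0 := by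
  refine le_antisymm (not_lt.1 fun hpos ↦ ?_) (lowB_nonneg T)
  have hunit := isUnit_adjoint_mul_self_of_lowB_pos hpos
  rw [hT.adjoint_eq] at hunit
  exact (spectrum.zero_mem_iff ℝ).1 (zero_mem_spectrum_mul_self_iff.2 h0) hunit

end InnerProductSpace

lemma isSelfAdjoint_oAbs (T : H →L[ℂ] H) : IsSelfAdjoint (oAbs T) :=
  cfc_predicate _ _

lemma isSelfAdjoint_oPow (T : H →L[ℂ] H) (r : ℝ) : IsSelfAdjoint (oPow T r) :=
  cfc_predicate _ _

lemma rpow_mem_spectrum_oPow {T : H →L[ℂ] H} (hT : IsSelfAdjoint T) {r : ℝ} (hr : 0 ≤ r)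
    {x : ℝ} (hx : x ∈ spectrum ℝ T) : x ^ r ∈ spectrum ℝ (oPow T r) := by
  rw [oPow, cfc_map_spectrum (fun t : ℝ ↦ t ^ r) T hT (Real.continuous_rpow_const hr).continuousOn]
  exact ⟨x, hx, rfl⟩

lemma zero_mem_spectrum_oAbs {T : H →L[ℂ] H} (hT : IsSelfAdjoint T)
    (h0 : (0 : ℝ) ∈ spectrum ℝ T) : (0 : ℝ) ∈ spectrum ℝ (oAbs T) := by
  have hTT : IsSelfAdjoint (T * T) := by rw [IsSelfAdjoint, star_mul, hT.star_eq]
  rw [oAbs, hT.adjoint_eq, cfc_map_spectrum Real.sqrt (T * T) hTT]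
  exact ⟨0, zero_mem_spectrum_mul_self_iff.2 h0, Real.sqrt_zero⟩

lemma zero_mem_spectrum_sub_norm_smul_one [Nontrivial H] {A : H →L[ℂ] H} (hA : 0 ≤ A) :
    (0 : ℝ) ∈ spectrum ℝ (A - ‖A‖ • 1) := by
  rw [← Algebra.algebraMap_eq_smul_one, ← spectrum.sub_singleton_eq]
  exact ⟨‖A‖, CStarAlgebra.norm_mem_spectrum_of_nonneg hA, ‖A‖, rfl, sub_self _⟩

theorem numRad_rpow_le_of_positive_contraction
    (A : H →L[ℂ] H) (hA : A.IsPositive) (hA1 : ‖A‖ ≤ 1) (p : ℝ) (hp : 2 ≤ p) :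
    numRad A ^ (2 * p) ≤ ‖oPow A p‖ - lowB (oPow (oAbs (A - ‖A‖ • 1)) p) := by
  have hp0 : 0 < p := by linarith
  rcases subsingleton_or_nontrivial H with hH | hH
  · simp [numRad, lowB, Subsingleton.elim _ (0 : H), Real.zero_rpow (by positivity : 2 * p ≠ 0)]
  have hA0 : 0 ≤ A := (nonneg_iff_isPositive A).2 hA
  have hlow : lowB (oPow (oAbs (A - ‖A‖ • 1)) p) = 0 := by
    refine lowB_eq_zero_of_zero_mem_spectrum (isSelfAdjoint_oPow _ p) ?_
    have hM : IsSelfAdjoint (A - ‖A‖ • 1) := hA.isSelfAdjoint.sub (.smul (star_trivial _) (.one _))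
    simpa [Real.zero_rpow hp0.ne'] using rpow_mem_spectrum_oPow (isSelfAdjoint_oAbs _) hp0.le
      (zero_mem_spectrum_oAbs hM (zero_mem_spectrum_sub_norm_smul_one hA0))
  have hpow : ‖A‖ ^ p ≤ ‖oPow A p‖ := by
    have h := spectrum.norm_le_norm_of_mem (rpow_mem_spectrum_oPow
      hA.isSelfAdjoint hp0.le (CStarAlgebra.norm_mem_spectrum_of_nonneg hA0))
    rwa [Real.norm_of_nonneg (by positivity)] at h
  calc numRad A ^ (2 * p) ≤ ‖A‖ ^ (2 * p) :=
        Real.rpow_le_rpow (numRad_nonneg A) (numRad_le_norm A) (by linarith)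
    _ ≤ ‖A‖ ^ p := Real.rpow_le_rpow_of_exponent_ge' (norm_nonneg _) hA1 hp0.le (by linarith)
    _ ≤ ‖oPow A p‖ := hpow
    _ = ‖oPow A p‖ - lowB (oPow (oAbs (A - ‖A‖ • 1)) p) := by rw [hlow, sub_zero]
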